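/- arXiv:2605.29903 — 2 statements merged into one kernel-verified Lean document; each statement's English description precedes it below -/
import Mathlib

section
/- Let q ∈ ℂ with 0 < |q| < 1, let k ≥ 3 be an integer, and let x ∈ ℂ with |x| = |q|^{-(k-1/2)}. Then |G(q,x)| ≤ M(|q|) and |G(q,x/q)| ≤ M(|q|). -/
/-- `G(q,x) = Σ_{j≥1} q^(j(j-1)/2) x^(-j)` (indexed here by `j ↦ j+1`, `j : ℕ`). -/
noncomputable def G (q x : ℂ) : ℂ := ∑' j : ℕ, q ^ (j * (j + 1) / 2) * x⁻¹ ^ (j + 1)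

/-- `M(s) = Σ_{j≥1} s^(j(j+4)/2)` (indexed here by `j ↦ j+1`, `j : ℕ`); the
exponents are half-integers, hence real powers. -/
noncomputable def M (s : ℝ) : ℝ := ∑' j : ℕ, s ^ ((((j : ℝ) + 1) * ((j : ℝ) + 5)) / 2)

lemma M_summable {s : ℝ} (hs0 : 0 < s) (hs1 : s < 1) :
    Summable (fun j : ℕ => s ^ ((((j : ℝ) + 1) * ((j : ℝ) + 5)) / 2)) := by
  apply Summable.of_nonneg_of_le (fun j => Real.rpow_nonneg hs0.le _)
    (fun j => ?_) (summable_geometric_of_lt_one hs0.le hs1)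
  calc s ^ ((((j : ℝ) + 1) * ((j : ℝ) + 5)) / 2) ≤ s ^ ((j : ℝ)) := by
        apply Real.rpow_le_rpow_of_exponent_ge hs0 hs1.le
        nlinarith [Nat.cast_nonneg (α := ℝ) j]
    _ = s ^ j := Real.rpow_natCast s j

lemma cast_tri (j : ℕ) : ((j * (j + 1) / 2 : ℕ) : ℝ) = (j : ℝ) * ((j : ℝ) + 1) / 2 := by
  rw [Nat.cast_div (Nat.even_mul_succ_self j).two_dvd (by norm_num)]
  push_cast; ring

lemma key {q : ℂ} (hq0 : 0 < ‖q‖) (hq1 : ‖q‖ < 1)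
    (y : ℂ) (t : ℝ) (ht : 5 / 2 ≤ t)
    (hy : ‖y‖ = ‖q‖ ^ (-t)) :
    ‖G q y‖ ≤ M (‖q‖) := by
  set s := ‖q‖ with hs
  have hinv : ‖y⁻¹‖ = s ^ t := by
    rw [norm_inv, hy, Real.rpow_neg hq0.le, inv_inv]
  have habs : ∀ j : ℕ, ‖q ^ (j * (j + 1) / 2) * y⁻¹ ^ (j + 1)‖
      = s ^ ((j : ℝ) * ((j : ℝ) + 1) / 2 + t * ((j : ℝ) + 1)) := by
    intro j
    rw [norm_mul, norm_pow, norm_pow, hinv, ← hs]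
    rw [← Real.rpow_natCast s (j * (j + 1) / 2), ← Real.rpow_natCast (s ^ t) (j + 1),
      ← Real.rpow_mul hq0.le, ← Real.rpow_add hq0, cast_tri]
    push_cast; ring_nf
  have hbound : ∀ j : ℕ, ‖q ^ (j * (j + 1) / 2) * y⁻¹ ^ (j + 1)‖
      ≤ s ^ ((((j : ℝ) + 1) * ((j : ℝ) + 5)) / 2) := by
    intro j
    rw [habs j]
    apply Real.rpow_le_rpow_of_exponent_ge hq0 hq1.le
    nlinarith [Nat.cast_nonneg (α := ℝ) j]
  have hMs := M_summable hq0 hq1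
  have hsum : Summable (fun j : ℕ => ‖q ^ (j * (j + 1) / 2) * y⁻¹ ^ (j + 1)‖) := by
    apply Summable.of_nonneg_of_le (fun j => norm_nonneg _) (fun j => ?_) hMs
    simpa using hbound j
  calc ‖G q y‖ ≤ ∑' j : ℕ, ‖q ^ (j * (j + 1) / 2) * y⁻¹ ^ (j + 1)‖ := by
        exact norm_tsum_le_tsum_norm hsum
    _ ≤ M s := Summable.tsum_le_tsum (fun j => by
        simpa using hbound j) hsum hMs

theorem G_bound (q : ℂ) (hq0 : 0 < ‖q‖) (hq1 : ‖q‖ < 1)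
    (k : ℕ) (hk : 3 ≤ k) (x : ℂ)
    (hx : ‖x‖ = ‖q‖ ^ (-((k : ℝ) - 1 / 2))) :
    ‖G q x‖ ≤ M (‖q‖) ∧
    ‖G q (x / q)‖ ≤ M (‖q‖) := by
  have hk3 : (3 : ℝ) ≤ (k : ℝ) := by exact_mod_cast hk
  constructor
  · exact key hq0 hq1 x ((k : ℝ) - 1 / 2) (by linarith) hx
  · apply key hq0 hq1 (x / q) ((k : ℝ) + 1 / 2) (by linarith)
    rw [norm_div, hx, div_eq_iff hq0.ne', ← Real.rpow_add_one hq0.ne']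
    congr 1; ring
end

section
/- Let q ∈ ℂ with 0 < |q| ≤ 0.6 and set r := |q|. Let k ≥ 3 be an integer and let x ∈ ℂ with |x| = r^{-(k-1/2)}. If |Θ*(q,x)| > M(r) and M(r) ≥ |G(q,x)|, then |Θ*(q,x/q)| > M(r) and M(r) ≥ |G(q,x/q)|. -/
/-- The Jacobi-type theta series `Θ*(q,x) = Σ_{j∈ℤ} q^(j(j+1)/2) x^j`. -/
noncomputable def thetaStar (q x : ℂ) : ℂ := ∑' j : ℤ, q ^ (j * (j + 1) / 2) * x ^ j

lemma thetaStar_shift (q x : ℂ) (hq : q ≠ 0) (hx : x ≠ 0) :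
    thetaStar q (x / q) = x * thetaStar q x := by
  unfold thetaStar
  rw [← tsum_mul_left]
  calc (∑' j : ℤ, q ^ (j * (j + 1) / 2) * (x / q) ^ j)
      = ∑' j : ℤ, q ^ ((j + 1) * ((j + 1) + 1) / 2) * (x / q) ^ (j + 1) :=
        ((Equiv.addRight (1:ℤ)).tsum_eq
          (fun j => q ^ (j * (j + 1) / 2) * (x / q) ^ j)).symm
    _ = ∑' j : ℤ, x * (q ^ (j * (j + 1) / 2) * x ^ j) := by
        refine tsum_congr fun j => ?_
        have hE : (j + 1) * ((j + 1) + 1) / 2 = j * (j + 1) / 2 + (j + 1) := by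
          obtain ⟨m, hm⟩ := Int.even_mul_succ_self j
          have h2 : (j + 1) * ((j + 1) + 1) = j * (j + 1) + 2 * (j + 1) := by ring
          rw [h2, hm]; omega
        rw [hE, zpow_add₀ hq, div_zpow, zpow_add_one₀ hx]
        have hqz : q ^ (j + 1) ≠ 0 := zpow_ne_zero _ hq
        field_simp

theorem thetaStar_G_step (q : ℂ) (hq0 : 0 < ‖q‖) (hq1 : ‖q‖ ≤ 0.6)
    (k : ℕ) (hk : 3 ≤ k) (x : ℂ)
    (hx : ‖x‖ = ‖q‖ ^ (-((k : ℝ) - 1 / 2)))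
    (h1 : M (‖q‖) < ‖thetaStar q x‖)
    (h2 : ‖G q x‖ ≤ M (‖q‖)) :
    M (‖q‖) < ‖thetaStar q (x / q)‖ ∧
    ‖G q (x / q)‖ ≤ M (‖q‖) := by
  set r := ‖q‖ with hr
  have hq : q ≠ 0 := norm_pos_iff.mp hq0
  have hr1 : r < 1 := lt_of_le_of_lt hq1 (by norm_num)
  have hxpos : 0 < ‖x‖ := by
    rw [hx]; exact Real.rpow_pos_of_pos hq0 _
  have hxne : x ≠ 0 := by
    intro h; rw [h] at hxpos; simp at hxpos
  have hk3 : (3:ℝ) ≤ (k:ℝ) := by exact_mod_cast hk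
  have hx1 : 1 < ‖x‖ := by
    rw [hx]
    exact (Real.one_lt_rpow_iff_of_pos hq0).mpr (Or.inr ⟨hr1, by linarith⟩)
  have hM0 : 0 ≤ M r :=
    tsum_nonneg fun j => Real.rpow_nonneg hq0.le _
  constructor
  · rw [thetaStar_shift q x hq hxne, norm_mul]
    calc M r < ‖thetaStar q x‖ := h1
      _ = 1 * ‖thetaStar q x‖ := (one_mul _).symm
      _ ≤ ‖x‖ * ‖thetaStar q x‖ :=
          mul_le_mul_of_nonneg_right hx1.le (norm_nonneg _)
  · unfold G M
    have e0 : ‖(x / q)⁻¹‖ = r ^ ((k:ℝ) + 1/2) := by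
      rw [norm_inv, norm_div, hx, ← hr, inv_div,
        Real.rpow_neg hq0.le, div_eq_mul_inv, inv_inv]
      have h5 : r * r ^ ((k:ℝ) - 1/2) = r ^ (1:ℝ) * r ^ ((k:ℝ) - 1/2) := by
        rw [Real.rpow_one]
      rw [h5, ← Real.rpow_add hq0]
      congr 1
      ring
    have hfg : ∀ j : ℕ, ‖q ^ (j * (j + 1) / 2) * ((x / q)⁻¹) ^ (j + 1)‖
        ≤ r ^ ((((j : ℝ) + 1) * ((j : ℝ) + 5)) / 2) := by
      intro j
      have hcast : (↑(j * (j + 1) / 2) : ℝ) = ((j : ℝ) * ((j : ℝ) + 1)) / 2 := by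
        obtain ⟨m, hm⟩ := Nat.even_mul_succ_self j
        have h1' : j * (j + 1) / 2 = m := by omega
        have h2' : ((j : ℝ) * ((j : ℝ) + 1)) = (m : ℝ) + (m : ℝ) := by
          exact_mod_cast congrArg (Nat.cast : ℕ → ℝ) hm
        rw [h1', h2']; ring
      have habs : ‖q ^ (j * (j + 1) / 2) * ((x / q)⁻¹) ^ (j + 1)‖
          = r ^ (((j : ℝ) * ((j : ℝ) + 1)) / 2 + ((k:ℝ) + 1/2) * ((j:ℝ) + 1)) := by
        rw [norm_mul, norm_pow, norm_pow, e0, ← hr,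
          ← Real.rpow_natCast r (j * (j + 1) / 2), hcast,
          ← Real.rpow_natCast (r ^ ((k:ℝ) + 1/2)) (j + 1),
          ← Real.rpow_mul hq0.le, ← Real.rpow_add hq0]
        push_cast
        ring_nf
      rw [habs]
      apply Real.rpow_le_rpow_of_exponent_ge hq0 hr1.le
      have hj0 : (0:ℝ) ≤ (j:ℝ) := Nat.cast_nonneg j
      nlinarith
    have hgsum : Summable (fun j : ℕ => r ^ ((((j : ℝ) + 1) * ((j : ℝ) + 5)) / 2)) := by
      apply Summable.of_nonneg_of_le (fun j => Real.rpow_nonneg hq0.le _)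
        (fun j => ?_) (summable_geometric_of_lt_one hq0.le hr1)
      calc r ^ ((((j : ℝ) + 1) * ((j : ℝ) + 5)) / 2) ≤ r ^ ((j:ℝ)) := by
            apply Real.rpow_le_rpow_of_exponent_ge hq0 hr1.le
            have hj0 : (0:ℝ) ≤ (j:ℝ) := Nat.cast_nonneg j
            nlinarith
        _ = r ^ j := Real.rpow_natCast r j
    have hfsum : Summable (fun j : ℕ =>
        ‖q ^ (j * (j + 1) / 2) * ((x / q)⁻¹) ^ (j + 1)‖) :=
      Summable.of_nonneg_of_le (fun j => norm_nonneg _) hfg hgsum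
    calc ‖∑' j : ℕ, q ^ (j * (j + 1) / 2) * ((x / q)⁻¹) ^ (j + 1)‖
        ≤ ∑' j : ℕ, ‖q ^ (j * (j + 1) / 2) * ((x / q)⁻¹) ^ (j + 1)‖ :=
          norm_tsum_le_tsum_norm hfsum
      _ ≤ ∑' j : ℕ, r ^ ((((j : ℝ) + 1) * ((j : ℝ) + 5)) / 2) :=
          Summable.tsum_le_tsum hfg hfsum hgsum
end
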